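/- arXiv:1005.5133 — 2 statements merged into one kernel-verified Lean document; each statement's English description precedes it below -/
import Mathlib

section
/- The derivative of φ(t) := (1/2)(√(1+t⁴) + 2 log t − log(1 + √(1+t⁴))) satisfies φ'(t) = √(1+t⁴)/t for all t > 0. -/
/-- Radial profile of the Eguchi–Hanson Kähler potential. -/
noncomputable def ehProfile (t : ℝ) : ℝ :=
  (1 / 2) * (Real.sqrt (1 + t ^ 4) + 2 * Real.log t - Real.log (1 + Real.sqrt (1 + t ^ 4)))

/-!
Write `s = √(1 + t⁴)`, so that `2 φ = g(s) + 2 log t` with `g(x) = x - log (1 + x)` and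
`g'(x) = x / (1 + x)`. By the chain rule `g(s)' = s / (1 + s) · 2t³ / s = 2t³ / (1 + s)`, and
since `(1 + s)(s - 1) = s² - 1 = t⁴` this equals `2 (s - 1) / t`. Adding `(2 log t)' = 2 / t`
gives `2 φ' = 2 s / t`.
-/

open Real

theorem hasDerivAt_sub_log_one_add {x : ℝ} (hx : -1 < x) :
    HasDerivAt (fun y => y - log (1 + y)) (x / (1 + x)) x := by
  have hx' : 1 + x ≠ 0 := by linarith
  refine ((hasDerivAt_id' x).sub (((hasDerivAt_id' x).const_add 1).log hx')).congr_deriv ?_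
  field_simp
  ring

theorem hasDerivAt_sqrt_one_add_pow_four (t : ℝ) :
    HasDerivAt (fun x => √(1 + x ^ 4)) (2 * t ^ 3 / √(1 + t ^ 4)) t := by
  refine (((hasDerivAt_pow 4 t).const_add 1).sqrt (by positivity)).congr_deriv ?_
  push_cast
  ring

theorem pow_four_div_one_add_sqrt (t : ℝ) : t ^ 4 / (1 + √(1 + t ^ 4)) = √(1 + t ^ 4) - 1 := by
  have hs : √(1 + t ^ 4) ^ 2 = 1 + t ^ 4 := sq_sqrt (by positivity)
  have hpos : 0 < 1 + √(1 + t ^ 4) := by positivity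
  rw [div_eq_iff hpos.ne']
  linear_combination -hs

/-- `φ'(t) = √(1+t⁴)/t` for `t > 0`. -/
theorem ehProfile_hasDerivAt (t : ℝ) (ht : 0 < t) :
    HasDerivAt ehProfile (Real.sqrt (1 + t ^ 4) / t) t := by
  have hprofile :
      ehProfile = fun x => 1 / 2 * ((√(1 + x ^ 4) - log (1 + √(1 + x ^ 4))) + 2 * log x) := by
    funext x
    simp only [ehProfile]
    ring
  have hs : 0 < √(1 + t ^ 4) := sqrt_pos.mpr (by positivity)
  rw [hprofile]
  refine ((((hasDerivAt_sub_log_one_add (by linarith)).comp t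
    (hasDerivAt_sqrt_one_add_pow_four t)).add
    ((hasDerivAt_log ht.ne').const_mul 2)).const_mul (1 / 2)).congr_deriv ?_
  calc 1 / 2 * (√(1 + t ^ 4) / (1 + √(1 + t ^ 4)) * (2 * t ^ 3 / √(1 + t ^ 4)) + 2 * t⁻¹)
      = (t ^ 4 / (1 + √(1 + t ^ 4)) + 1) / t := by field_simp
    _ = √(1 + t ^ 4) / t := by rw [pow_four_div_one_add_sqrt]; ring
end

section
/- Let u be a harmonic function on ℝ × T³ (the flat product of the real line and a flat 3-torus) such that u(t,x) = λ·|t| + O(|t|^{-a}) as |t| → ∞, for some constant λ ∈ ℝ and some a > 0. Then λ = 0 and u ≡ 0. -/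
open scoped BigOperators

/-- The flat Laplacian of a function on `ℝ⁴`, computed in the standard coordinates. -/
noncomputable def laplacian (u : EuclideanSpace ℝ (Fin 4) → ℝ)
    (x : EuclideanSpace ℝ (Fin 4)) : ℝ :=
  ∑ i : Fin 4,
    (fderiv ℝ (fun y => fderiv ℝ u y (EuclideanSpace.single i 1)) x)
      (EuclideanSpace.single i 1)

/-!
For a function `w` that is `1`-periodic in the last three coordinates, let `W(t)` be its average
over the torus fibre `{t} × T³`. Differentiating under the integral, `W''` is the fibre average of
`∂₀²w`, which equals the fibre average of `Δw`: the averages of `∂ᵢ²w` for `i = 1, 2, 3` vanish by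
the fundamental theorem of calculus along the periodic direction `i`.

For harmonic `u` the average `W` is affine, so `W(t) + W(-t)` is constant; comparing with `λ|t|` at
both ends forces `λ = 0`. Then `Δ(u²) = 2|∇u|² ≥ 0`, so the fibre average of `u²` is a convex
function of `t` tending to `0` at both ends, hence zero, and `u = 0`.
-/

open Set Filter Topology

noncomputable section

theorem hasDerivAt_intervalIntegral_of_continuous {F F' : ℝ → ℝ → ℝ}
    (hF : Continuous (Function.uncurry F)) (hF' : Continuous (Function.uncurry F'))
    (hd : ∀ s c, HasDerivAt (fun s => F s c) (F' s c) s) (a b s₀ : ℝ) :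
    HasDerivAt (fun s => ∫ c in a..b, F s c) (∫ c in a..b, F' s₀ c) s₀ := by
  obtain ⟨M, hM⟩ := ((isCompact_closedBall s₀ 1).prod
    (isCompact_uIcc (a := a) (b := b))).exists_bound_of_continuousOn hF'.continuousOn
  have hFs : ∀ s, Continuous (F s) := fun s => hF.comp (Continuous.prodMk_right s)
  refine (intervalIntegral.hasDerivAt_integral_of_dominated_loc_of_deriv_le (bound := fun _ => M)
    (Metric.closedBall_mem_nhds s₀ one_pos) (.of_forall fun s => (hFs s).aestronglyMeasurable)
    ((hFs s₀).intervalIntegrable a b) (hF'.comp (Continuous.prodMk_right s₀)).aestronglyMeasurable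
    ?_ intervalIntegrable_const ?_).2
  · exact .of_forall fun c hc s hs => hM (s, c) ⟨hs, uIoc_subset_uIcc hc⟩
  · exact .of_forall fun c _ s _ => hd s c

variable {E : Type*} [NormedAddCommGroup E] [NormedSpace ℝ E]

def segmentAvg (v : E) (g : E → ℝ) (x : E) : ℝ := ∫ s in (0 : ℝ)..1, g (x + s • v)

section segmentAvg

variable {v : E} {g : E → ℝ}

theorem continuous_segmentAvg (hg : Continuous g) : Continuous (segmentAvg v g) :=
  intervalIntegral.continuous_parametric_intervalIntegral_of_continuous' (by fun_prop) 0 1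

theorem segmentAvg_const (c : ℝ) : segmentAvg v (fun _ => c) = fun _ => c := by
  ext; simp [segmentAvg]

theorem segmentAvg_periodic {w : E} (hper : ∀ y, g (y + w) = g y) (y : E) :
    segmentAvg v g (y + w) = segmentAvg v g y := by
  unfold segmentAvg
  congr 1 with s
  rw [add_right_comm, hper]

theorem segmentAvg_mono_on {f : E → ℝ} {S : Set E} (hS : ∀ y ∈ S, ∀ s : ℝ, y + s • v ∈ S)
    (hf : Continuous f) (hg : Continuous g) (hfg : ∀ y ∈ S, f y ≤ g y) :
    ∀ y ∈ S, segmentAvg v f y ≤ segmentAvg v g y := fun y hy =>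
  intervalIntegral.integral_mono_on zero_le_one ((hf.comp (by fun_prop)).intervalIntegrable 0 1)
    ((hg.comp (by fun_prop)).intervalIntegrable 0 1) fun s _ => hfg _ (hS y hy s)

theorem segmentAvg_finset_sum {ι : Type*} (s : Finset ι) {g : ι → E → ℝ}
    (hg : ∀ i ∈ s, Continuous (g i)) :
    segmentAvg v (fun x => ∑ i ∈ s, g i x) = fun x => ∑ i ∈ s, segmentAvg v (g i) x := by
  ext x
  exact intervalIntegral.integral_finsetSum fun i hi =>
    ((hg i hi).comp (by fun_prop)).intervalIntegrable 0 1

theorem hasDerivAt_segmentAvg {w : E} {g' : E → ℝ} (hg : Continuous g) (hg' : Continuous g')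
    (hd : ∀ (y : E) (s : ℝ), HasDerivAt (fun s => g (y + s • w)) (g' (y + s • w)) s)
    (y : E) (s : ℝ) :
    HasDerivAt (fun s => segmentAvg v g (y + s • w)) (segmentAvg v g' (y + s • w)) s := by
  refine hasDerivAt_intervalIntegral_of_continuous (F := fun s c => g (y + s • w + c • v))
    (F' := fun s c => g' (y + s • w + c • v)) (by fun_prop) (by fun_prop) (fun s c => ?_) 0 1 s
  simpa only [add_right_comm] using hd (y + c • v) s

theorem segmentAvg_eq_zero_of_periodic {g' : E → ℝ} (hg' : Continuous g')
    (hd : ∀ (y : E) (s : ℝ), HasDerivAt (fun s => g (y + s • v)) (g' (y + s • v)) s)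
    (hper : ∀ y, g (y + v) = g y) : segmentAvg v g' = 0 := by
  ext y
  rw [segmentAvg, intervalIntegral.integral_eq_sub_of_hasDerivAt (fun s _ => hd y s)
    ((hg'.comp (by fun_prop)).intervalIntegrable 0 1)]
  simp [hper]

end segmentAvg

def boxAvg : List E → (E → ℝ) → E → ℝ
  | [], g => g
  | v :: vs, g => segmentAvg v (boxAvg vs g)

section boxAvg

variable {g : E → ℝ}

theorem continuous_boxAvg (hg : Continuous g) : ∀ vs : List E, Continuous (boxAvg vs g)
  | [] => hg
  | _ :: vs => continuous_segmentAvg (continuous_boxAvg hg vs)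

theorem boxAvg_const (c : ℝ) : ∀ vs : List E, boxAvg vs (fun _ => c) = fun _ => c
  | [] => rfl
  | v :: vs => by rw [boxAvg, boxAvg_const c vs, segmentAvg_const]

theorem boxAvg_periodic {w : E} (hper : ∀ y, g (y + w) = g y) :
    ∀ (vs : List E) (y : E), boxAvg vs g (y + w) = boxAvg vs g y
  | [] => hper
  | _ :: vs => segmentAvg_periodic (boxAvg_periodic hper vs)

theorem boxAvg_mono_on {f : E → ℝ} (hf : Continuous f) (hg : Continuous g) {vs : List E}
    {S : Set E} (hS : ∀ v ∈ vs, ∀ y ∈ S, ∀ s : ℝ, y + s • v ∈ S) (hfg : ∀ y ∈ S, f y ≤ g y) :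
    ∀ y ∈ S, boxAvg vs f y ≤ boxAvg vs g y := by
  induction vs with
  | nil => exact hfg
  | cons v vs ih =>
    exact segmentAvg_mono_on (hS v List.mem_cons_self) (continuous_boxAvg hf vs)
      (continuous_boxAvg hg vs) (ih fun w hw => hS w (List.mem_cons_of_mem v hw))

theorem boxAvg_nonneg (hg : Continuous g) (hg₀ : ∀ y, 0 ≤ g y) (vs : List E) (y : E) :
    0 ≤ boxAvg vs g y := by
  simpa [boxAvg_const] using
    boxAvg_mono_on continuous_const hg (vs := vs) (S := univ) (by simp) (fun y _ => hg₀ y) y trivial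

theorem boxAvg_finset_sum {ι : Type*} (s : Finset ι) {g : ι → E → ℝ}
    (hg : ∀ i ∈ s, Continuous (g i)) : ∀ vs : List E,
    boxAvg vs (fun x => ∑ i ∈ s, g i x) = fun x => ∑ i ∈ s, boxAvg vs (g i) x
  | [] => rfl
  | v :: vs => by
    rw [boxAvg, boxAvg_finset_sum s hg vs,
      segmentAvg_finset_sum s fun i hi => continuous_boxAvg (hg i hi) vs]
    rfl

theorem hasDerivAt_boxAvg {w : E} {g' : E → ℝ} (hg : Continuous g) (hg' : Continuous g')
    (hd : ∀ (y : E) (s : ℝ), HasDerivAt (fun s => g (y + s • w)) (g' (y + s • w)) s) :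
    ∀ (vs : List E) (y : E) (s : ℝ),
      HasDerivAt (fun s => boxAvg vs g (y + s • w)) (boxAvg vs g' (y + s • w)) s
  | [] => hd
  | _ :: vs => hasDerivAt_segmentAvg (continuous_boxAvg hg vs) (continuous_boxAvg hg' vs)
      (hasDerivAt_boxAvg hg hg' hd vs)

theorem boxAvg_eq_zero_of_mem {v : E} {g' : E → ℝ} (hg : Continuous g) (hg' : Continuous g')
    (hd : ∀ (y : E) (s : ℝ), HasDerivAt (fun s => g (y + s • v)) (g' (y + s • v)) s)
    (hper : ∀ y, g (y + v) = g y) {vs : List E} (hv : v ∈ vs) : boxAvg vs g' = 0 := by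
  induction vs with
  | nil => cases hv
  | cons w vs ih =>
    rcases List.mem_cons.1 hv with rfl | hv
    · exact segmentAvg_eq_zero_of_periodic (continuous_boxAvg hg' vs)
        (hasDerivAt_boxAvg hg hg' hd vs) (boxAvg_periodic hper vs)
    · rw [boxAvg, ih hv]
      exact segmentAvg_const 0

theorem eq_zero_of_boxAvg_eq_zero (hg : Continuous g) (hg₀ : ∀ y, 0 ≤ g y) {vs : List E}
    {x : E} (h : boxAvg vs g x = 0) : g x = 0 := by
  induction vs with
  | nil => exact h
  | cons v vs ih =>
    refine ih (le_antisymm ?_ (boxAvg_nonneg hg hg₀ vs x))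
    by_contra! hpos
    refine (intervalIntegral.integral_pos zero_lt_one
      ((continuous_boxAvg hg vs).comp (by fun_prop)).continuousOn
      (fun s _ => boxAvg_nonneg hg hg₀ vs _) ⟨0, left_mem_Icc.2 zero_le_one, ?_⟩).ne' h
    simpa using hpos

end boxAvg

def dirDeriv (v : E) (g : E → ℝ) (x : E) : ℝ := fderiv ℝ g x v

section dirDeriv

variable {g : E → ℝ}

theorem hasDerivAt_dirDeriv (hg : Differentiable ℝ g) (v y : E) (s : ℝ) :
    HasDerivAt (fun s => g (y + s • v)) (dirDeriv v g (y + s • v)) s := by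
  have hline : HasDerivAt (fun s : ℝ => y + s • v) v s := by
    simpa using ((hasDerivAt_id s).smul_const v).const_add y
  exact (hg _).hasFDerivAt.comp_hasDerivAt s hline

theorem ContDiff.dirDeriv {n : ℕ} (hg : ContDiff ℝ (n + 1) g) (v : E) :
    ContDiff ℝ n (dirDeriv v g) :=
  (hg.fderiv_right le_rfl).clm_apply contDiff_const

theorem dirDeriv_periodic {w : E} (hper : ∀ y, g (y + w) = g y) (v y : E) :
    dirDeriv v g (y + w) = dirDeriv v g y := by
  simp only [dirDeriv, ← fderiv_comp_add_right, hper]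

theorem dirDeriv_dirDeriv_mul_self (hg : ContDiff ℝ 2 g) (v x : E) :
    dirDeriv v (dirDeriv v fun y => g y * g y) x =
      2 * (dirDeriv v g x ^ 2 + g x * dirDeriv v (dirDeriv v g) x) := by
  have hg1 : Differentiable ℝ g := hg.differentiable two_ne_zero
  have hDg : Differentiable ℝ (dirDeriv v g) := (hg.dirDeriv (n := 1) v).differentiable one_ne_zero
  have hsq : dirDeriv v (fun y => g y * g y) = fun y => 2 * (g y * dirDeriv v g y) := by
    ext y
    simp only [dirDeriv, fderiv_fun_mul (hg1 y) (hg1 y)]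
    simp only [add_apply, smul_apply, smul_eq_mul]
    ring
  rw [hsq]
  show fderiv ℝ (fun y => 2 * (g y * dirDeriv v g y)) x v = _
  rw [fderiv_const_mul ((hg1 x).fun_mul (hDg x)), fderiv_fun_mul (hg1 x) (hDg x)]
  simp only [dirDeriv, smul_add, add_apply, smul_apply,
    smul_eq_mul]
  ring

end dirDeriv

theorem eq_add_mul_of_hasDerivAt_of_hasDerivAt_zero {φ φ' : ℝ → ℝ}
    (hφ : ∀ t, HasDerivAt φ (φ' t) t) (hφ' : ∀ t, HasDerivAt φ' 0 t) (t : ℝ) :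
    φ t = φ 0 + φ' 0 * t := by
  have hconst : ∀ s, φ' s = φ' 0 := fun s =>
    is_const_of_deriv_eq_zero (fun s => (hφ' s).differentiableAt) (fun s => (hφ' s).deriv) s 0
  have hlin : ∀ s, HasDerivAt (fun s => φ s - φ' 0 * s) 0 s := fun s => by
    simpa [hconst s] using (hφ s).fun_sub ((hasDerivAt_id s).const_mul (φ' 0))
  have := is_const_of_deriv_eq_zero (fun s => (hlin s).differentiableAt)
    (fun s => (hlin s).deriv) t 0
  simp only [mul_zero, sub_zero] at this
  linarith

theorem eq_zero_of_forall_abs_sub_mul_le {b m K : ℝ} (h : ∀ t ≥ 1, |b - m * t| ≤ K) : m = 0 := by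
  by_contra hm
  have hm' : 0 < |m| := abs_pos.2 hm
  have hK : 0 ≤ K := (abs_nonneg _).trans (h 1 le_rfl)
  set t := 1 + (2 * K + 1) / |m| with ht_def
  have ht : 1 ≤ t := le_add_of_nonneg_right (by positivity)
  have hgap : |m * (t - 1)| = 2 * K + 1 := by
    rw [abs_mul, abs_of_nonneg (sub_nonneg.2 ht), ht_def]
    field_simp
    ring
  have hle : |m * (t - 1)| ≤ 2 * K := calc
    |m * (t - 1)| = |(b - m * 1) - (b - m * t)| := by congr 1; ring
    _ ≤ |b - m * 1| + |b - m * t| := abs_sub _ _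
    _ ≤ 2 * K := by linarith [h 1 le_rfl, h t ht]
  linarith

theorem ConvexOn.nonpos_of_tendsto_cocompact {f : ℝ → ℝ} (hf : ConvexOn ℝ univ f)
    (hlim : Tendsto f (cocompact ℝ) (𝓝 0)) (t : ℝ) : f t ≤ 0 := by
  have hmid : ∀ R, f t ≤ (f (t - R) + f (t + R)) / 2 := fun R => by
    have := hf.2 (mem_univ (t - R)) (mem_univ (t + R)) (by norm_num : (0 : ℝ) ≤ 1 / 2)
      (by norm_num : (0 : ℝ) ≤ 1 / 2) (by norm_num)
    simp only [smul_eq_mul] at this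
    rw [show 1 / 2 * (t - R) + 1 / 2 * (t + R) = t by ring] at this
    linarith
  have hleft : Tendsto (fun R => t - R) atTop (cocompact ℝ) :=
    (tendsto_atBot_add_const_left atTop t tendsto_neg_atTop_atBot).mono_right atBot_le_cocompact
  have hright : Tendsto (fun R => t + R) atTop (cocompact ℝ) :=
    (tendsto_atTop_add_const_left atTop t tendsto_id).mono_right atTop_le_cocompact
  have hsum := ((hlim.comp hleft).add (hlim.comp hright)).div_const 2
  rw [zero_add, zero_div] at hsum
  exact ge_of_tendsto' hsum hmid

local notation "ℝ⁴" => EuclideanSpace ℝ (Fin 4)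

local notation "𝐞" i:max => EuclideanSpace.single (i : Fin 4) (1 : ℝ)

abbrev torusAvg : (ℝ⁴ → ℝ) → ℝ⁴ → ℝ := boxAvg [𝐞 1, 𝐞 2, 𝐞 3]

section torusAvg

variable {w : ℝ⁴ → ℝ}

theorem continuous_laplacian (hw : ContDiff ℝ 2 w) : Continuous (laplacian w) :=
  continuous_finsetSum _ fun _ _ => ((hw.dirDeriv (n := 1) _).dirDeriv (n := 0) _).continuous

theorem laplacian_mul_self (hw : ContDiff ℝ 2 w) (x : ℝ⁴) :
    laplacian (fun y => w y * w y) x =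
      2 * ∑ i, dirDeriv (𝐞 i) w x ^ 2 + 2 * w x * laplacian w x := by
  change ∑ i, dirDeriv (𝐞 i) (dirDeriv (𝐞 i) fun y => w y * w y) x =
    2 * ∑ i, dirDeriv (𝐞 i) w x ^ 2 + 2 * w x * ∑ i, dirDeriv (𝐞 i) (dirDeriv (𝐞 i) w) x
  simp only [dirDeriv_dirDeriv_mul_self hw, Fin.sum_univ_four]
  ring

theorem torusAvg_laplacian (hw : ContDiff ℝ 2 w)
    (hper : ∀ (x : ℝ⁴) (i : Fin 4), i ≠ 0 → w (x + 𝐞 i) = w x) :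
    torusAvg (laplacian w) = torusAvg (dirDeriv (𝐞 0) (dirDeriv (𝐞 0) w)) := by
  have hcont : ∀ i, Continuous (dirDeriv (𝐞 i) (dirDeriv (𝐞 i) w)) := fun i =>
    ((hw.dirDeriv (n := 1) _).dirDeriv (n := 0) _).continuous
  have hvanish : ∀ (i : Fin 3) x, torusAvg (dirDeriv (𝐞 i.succ) (dirDeriv (𝐞 i.succ) w)) x = 0 :=
    fun i => congrFun <| boxAvg_eq_zero_of_mem ((hw.dirDeriv (n := 1) _).continuous) (hcont _)
      (hasDerivAt_dirDeriv ((hw.dirDeriv (n := 1) _).differentiable one_ne_zero) _)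
      (dirDeriv_periodic (fun y => hper y i.succ i.succ_ne_zero) _) (by fin_cases i <;> simp)
  change boxAvg _ (fun x => ∑ i, dirDeriv (𝐞 i) (dirDeriv (𝐞 i) w) x) = _
  rw [boxAvg_finset_sum _ fun i _ => hcont i]
  ext x
  rw [Fin.sum_univ_succ, Finset.sum_eq_zero fun i _ => hvanish i x, add_zero]

theorem hasDerivAt_torusAvg (hw : ContDiff ℝ 1 w) (x : ℝ⁴) (t : ℝ) :
    HasDerivAt (fun t => torusAvg w (x + t • 𝐞 0))
      (torusAvg (dirDeriv (𝐞 0) w) (x + t • 𝐞 0)) t :=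
  hasDerivAt_boxAvg hw.continuous (hw.dirDeriv (n := 0) _).continuous
    (hasDerivAt_dirDeriv (hw.differentiable one_ne_zero) _) _ x t

theorem hasDerivAt_torusAvg_dirDeriv (hw : ContDiff ℝ 2 w)
    (hper : ∀ (x : ℝ⁴) (i : Fin 4), i ≠ 0 → w (x + 𝐞 i) = w x) (x : ℝ⁴) (t : ℝ) :
    HasDerivAt (fun t => torusAvg (dirDeriv (𝐞 0) w) (x + t • 𝐞 0))
      (torusAvg (laplacian w) (x + t • 𝐞 0)) t := by
  rw [torusAvg_laplacian hw hper]
  exact hasDerivAt_torusAvg (hw.dirDeriv (n := 1) _) x t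

theorem abs_torusAvg_sub_le {f : ℝ⁴ → ℝ} (hf : Continuous f) {x : ℝ⁴} {c M : ℝ}
    (h : ∀ z : ℝ⁴, z 0 = x 0 → |f z - c| ≤ M) : |torusAvg f x - c| ≤ M := by
  have hS : ∀ v ∈ [𝐞 1, 𝐞 2, 𝐞 3], ∀ z ∈ {z : ℝ⁴ | z 0 = x 0}, ∀ s : ℝ,
      z + s • v ∈ {z : ℝ⁴ | z 0 = x 0} := by
    simp +contextual
  have hle := boxAvg_mono_on hf (continuous_const (y := c + M)) hS
    (fun z hz => by linarith [abs_le.1 (h z hz)]) x rfl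
  have hge := boxAvg_mono_on (continuous_const (y := c - M)) hf hS
    (fun z hz => by linarith [abs_le.1 (h z hz)]) x rfl
  simp only [boxAvg_const] at hle hge
  exact abs_le.2 ⟨by linarith, by linarith⟩

end torusAvg

section harmonic

variable {u : ℝ⁴ → ℝ}

theorem harmonic_periodic_growth_rate_eq_zero (hu : ContDiff ℝ 2 u)
    (hper : ∀ (x : ℝ⁴) (i : Fin 4), i ≠ 0 → u (x + 𝐞 i) = u x) (hharm : ∀ x, laplacian u x = 0)
    {lam K : ℝ} (hasymp : ∀ x : ℝ⁴, 1 ≤ |x 0| → abs (u x - lam * |x 0|) ≤ K) : lam = 0 := by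
  set φ := fun t : ℝ => torusAvg u (t • 𝐞 0)
  have hφ : ∀ t, HasDerivAt φ (torusAvg (dirDeriv (𝐞 0) u) (t • 𝐞 0)) t := fun t => by
    simpa using hasDerivAt_torusAvg (hu.of_le one_le_two) 0 t
  have hφ' : ∀ t, HasDerivAt (fun t => torusAvg (dirDeriv (𝐞 0) u) (t • 𝐞 0)) 0 t := fun t => by
    simpa [funext hharm, boxAvg_const] using hasDerivAt_torusAvg_dirDeriv hu hper 0 t
  have hbound : ∀ t, 1 ≤ |t| → abs (φ t - lam * |t|) ≤ K := fun t ht =>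
    abs_torusAvg_sub_le hu.continuous fun z hz => by
      simp only [PiLp.smul_apply, PiLp.single_eq_same, smul_eq_mul, mul_one] at hz
      rw [← hz] at ht ⊢
      exact hasymp z ht
  have hsym : ∀ t, φ t + φ (-t) = 2 * φ 0 := fun t => by
    rw [eq_add_mul_of_hasDerivAt_of_hasDerivAt_zero hφ hφ' t,
      eq_add_mul_of_hasDerivAt_of_hasDerivAt_zero hφ hφ' (-t)]
    ring
  refine eq_zero_of_forall_abs_sub_mul_le (b := φ 0) (K := K) fun t ht => ?_
  have ht0 : |t| = t := abs_of_nonneg (by linarith)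
  have h₁ := hbound t (by rwa [ht0])
  have h₂ := hbound (-t) (by rwa [abs_neg, ht0])
  rw [ht0] at h₁
  rw [abs_neg, ht0] at h₂
  rw [abs_le] at h₁ h₂ ⊢
  constructor <;> linarith [hsym t]

theorem harmonic_periodic_eq_zero_of_decay (hu : ContDiff ℝ 2 u)
    (hper : ∀ (x : ℝ⁴) (i : Fin 4), i ≠ 0 → u (x + 𝐞 i) = u x) (hharm : ∀ x, laplacian u x = 0)
    {δ : ℝ → ℝ} (hδ : Tendsto δ (cocompact ℝ) (𝓝 0))
    (hdecay : ∀ᶠ t in cocompact ℝ, ∀ x : ℝ⁴, x 0 = t → |u x| ≤ δ t) (y : ℝ⁴) : u y = 0 := by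
  set q : ℝ⁴ → ℝ := fun x => u x * u x
  have hq : ContDiff ℝ 2 q := hu.mul hu
  have hq₀ : ∀ x, 0 ≤ q x := fun x => mul_self_nonneg (u x)
  have hqper : ∀ (x : ℝ⁴) (i : Fin 4), i ≠ 0 → q (x + 𝐞 i) = q x := fun x i hi => by
    simp only [q, hper x i hi]
  have hΔq : ∀ x, 0 ≤ laplacian q x := fun x => by
    rw [laplacian_mul_self hu, hharm, mul_zero, add_zero]
    positivity
  set x := y - y 0 • 𝐞 0 with hx
  set φ := fun t : ℝ => torusAvg q (x + t • 𝐞 0)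
  have hconvex : ConvexOn ℝ univ φ := by
    refine convexOn_of_hasDerivWithinAt2_nonneg convex_univ
      (fun t _ => (hasDerivAt_torusAvg (hq.of_le one_le_two) x t).continuousAt.continuousWithinAt)
      (fun t _ => (hasDerivAt_torusAvg (hq.of_le one_le_two) x t).hasDerivWithinAt)
      (fun t _ => (hasDerivAt_torusAvg_dirDeriv hq hqper x t).hasDerivWithinAt)
      fun t _ => boxAvg_nonneg (continuous_laplacian hq) hΔq _ _
  have hlim : Tendsto φ (cocompact ℝ) (𝓝 0) := by
    refine tendsto_of_tendsto_of_tendsto_of_le_of_le' tendsto_const_nhds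
      (by simpa using hδ.pow 2) (.of_forall fun t => boxAvg_nonneg hq.continuous hq₀ _ _) ?_
    filter_upwards [hdecay] with t ht
    have hbound := abs_torusAvg_sub_le (x := x + t • 𝐞 0) (c := 0) (M := δ t ^ 2) hq.continuous
      fun z hz => by
        simp only [hx, PiLp.add_apply, PiLp.sub_apply, PiLp.smul_apply, PiLp.single_eq_same,
          smul_eq_mul, mul_one, sub_self, zero_add] at hz
        rw [sub_zero, abs_mul_self, ← abs_mul_abs_self, sq]
        exact mul_self_le_mul_self (abs_nonneg _) (ht z hz)
    simpa only [sub_zero] using (abs_le.1 hbound).2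
  have hφy : torusAvg q (x + y 0 • 𝐞 0) = 0 :=
    le_antisymm (hconvex.nonpos_of_tendsto_cocompact hlim _) (boxAvg_nonneg hq.continuous hq₀ _ _)
  rw [hx, sub_add_cancel] at hφy
  exact mul_self_eq_zero.1 (eq_zero_of_boxAvg_eq_zero hq.continuous hq₀ hφy)

end harmonic

end

/-- a harmonic function on `ℝ × T³` (seen as a `ℤ³`-periodic harmonic
function on `ℝ⁴`, periodic in the last three coordinates) which is `λ·|t| + O(|t|^{-a})`
as `|t| → ∞` must have `λ = 0` and vanish identically. -/
theorem harmonic_on_R_times_T3_linear_growth_vanishes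
    (u : EuclideanSpace ℝ (Fin 4) → ℝ) (hu : ContDiff ℝ 2 u)
    (hper : ∀ (x : EuclideanSpace ℝ (Fin 4)) (i : Fin 4), i ≠ 0 →
      u (x + EuclideanSpace.single i 1) = u x)
    (hharm : ∀ x, laplacian u x = 0)
    (lam a C : ℝ) (ha : 0 < a)
    (hasymp : ∀ x : EuclideanSpace ℝ (Fin 4), 1 ≤ |x 0| →
      abs (u x - lam * |x 0|) ≤ C * |x 0| ^ (-a)) :
    lam = 0 ∧ ∀ x, u x = 0 := by
  have hrpow : ∀ t : ℝ, 1 ≤ |t| → C * |t| ^ (-a) ≤ |C| := fun t ht =>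
    (mul_le_mul_of_nonneg_right (le_abs_self C) (by positivity)).trans <|
      mul_le_of_le_one_right (abs_nonneg C) (Real.rpow_le_one_of_one_le_of_nonpos ht (by linarith))
  have hlam : lam = 0 :=
    harmonic_periodic_growth_rate_eq_zero hu hper hharm fun x hx => (hasymp x hx).trans (hrpow _ hx)
  refine ⟨hlam, harmonic_periodic_eq_zero_of_decay hu hper hharm
    (δ := fun t => C * |t| ^ (-a)) ?_ ?_⟩
  · have habs : Tendsto (fun t : ℝ => |t|) (cocompact ℝ) atTop := tendsto_norm_cocompact_atTop
    simpa using ((tendsto_rpow_neg_atTop ha).comp habs).const_mul C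
  · filter_upwards [(tendsto_norm_cocompact_atTop (E := ℝ)).eventually_ge_atTop 1] with t ht x hx
    subst hx
    simpa [hlam] using hasymp x ht
end
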